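/- Let (V, B_d, B_r) be an interconnection with incidence matrices G_d, G_r, such that (V, B_d ∪ B_r) is connected and B_d ≠ ∅. If there exists a nonzero vector x with G_dᵀ G_r x = 0 and sgn(G_rᵀ G_r x) = sgn(x) entrywise, then there exist Laplacians D ∈ lap(V, B_d) and R ∈ lap(V, B_r) with Re λ₂(D + iR) ≤ 0 (the interconnection is not SSS). -/

import Mathlib

open Matrix Polynomial

/-- `G` is the incidence matrix of a graph: every column is `e_k - e_ℓ`
for some pair of distinct vertices `k, ℓ`. -/
def IsIncidence {q p : ℕ} (G : Matrix (Fin q) (Fin p) ℝ) : Prop :=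
  ∀ j : Fin p, ∃ k ℓ : Fin q, k ≠ ℓ ∧
    ∀ i : Fin q, G i j = (if i = k then 1 else 0) - (if i = ℓ then 1 else 0)

/-- The complex matrix `D + iR` built from two real matrices. -/
noncomputable def cM {q : ℕ} (D R : Matrix (Fin q) (Fin q) ℝ) :
    Matrix (Fin q) (Fin q) ℂ :=
  D.map (fun a => (a : ℂ)) + Complex.I • (R.map (fun a => (a : ℂ)))

/-- `Re λ₂(M) > 0`: at most one eigenvalue (with multiplicity), ordered by real
part, has nonpositive real part. -/
noncomputable def reLam2Pos {q : ℕ} (M : Matrix (Fin q) (Fin q) ℂ) : Prop :=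
  (M.charpoly.roots.filter (fun μ : ℂ => μ.re ≤ 0)).card ≤ 1

/-- `Re λ₂(M) ≤ 0`: at least two eigenvalues (with multiplicity), ordered by real
part, have nonpositive real part. -/
noncomputable def reLam2Nonpos {q : ℕ} (M : Matrix (Fin q) (Fin q) ℂ) : Prop :=
  2 ≤ (M.charpoly.roots.filter (fun μ : ℂ => μ.re ≤ 0)).card

/-- The weighted Laplacian `G Λ Gᵀ`. -/
def lapOf {q p : ℕ} (G : Matrix (Fin q) (Fin p) ℝ) (w : Fin p → ℝ) :
    Matrix (Fin q) (Fin q) ℝ :=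
  G * diagonal w * Gᵀ

/-!
The eigenvalue `0` of `D + iR` always comes from the constant vector `𝟙`. For the second one,
take `y = G_r x`: then `D y = 0` for every `D ∈ lap(V, B_d)`, and since `G_rᵀ y` has the sign
pattern of `x`, there are positive weights `w` with `w ⊙ G_rᵀ y = x`, i.e. `R y = G_r x = y` for
`R = G_r diag(w) G_rᵀ`. Hence `(D + iR) y = i y`, and `0 ≠ i` are two eigenvalues with
nonpositive real part.
-/

theorem Real.exists_pos_mul_eq_of_sign_eq {a b : ℝ} (h : Real.sign a = Real.sign b) :
    ∃ w : ℝ, 0 < w ∧ w * a = b := by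
  by_cases ha : a = 0
  · subst ha
    exact ⟨1, one_pos, by rw [one_mul, eq_comm, ← Real.sign_eq_zero_iff, ← h, Real.sign_zero]⟩
  have hsa : Real.sign a ≠ 0 := mt Real.sign_eq_zero_iff.mp ha
  have hb : b ≠ 0 := mt Real.sign_eq_zero_iff.mpr (h ▸ hsa)
  refine ⟨b / a, ?_, div_mul_cancel₀ b ha⟩
  rw [← mul_div_mul_left b a hsa, h]
  exact div_pos (Real.sign_mul_pos_of_ne_zero b hb) (h ▸ Real.sign_mul_pos_of_ne_zero a ha)

theorem Matrix.mem_charpoly_roots_of_mulVec_eq_smul {n : Type*} [Fintype n] [DecidableEq n]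
    {K : Type*} [Field K] {M : Matrix n n K} {μ : K} {v : n → K} (hv : v ≠ 0)
    (hMv : M *ᵥ v = μ • v) : μ ∈ M.charpoly.roots := by
  have hμ : Module.End.HasEigenvalue (toLin' M) μ :=
    Module.End.hasEigenvalue_of_hasEigenvector <| Module.End.hasEigenvector_iff.mpr
      ⟨Module.End.mem_eigenspace_iff.mpr ((toLin'_apply M v).trans hMv), hv⟩
  rw [Module.End.hasEigenvalue_iff_isRoot_charpoly, charpoly_toLin'] at hμ
  exact (mem_roots M.charpoly_monic.ne_zero).mpr hμ

theorem reLam2Nonpos_of_mulVec_eq_smul {q : ℕ} {M : Matrix (Fin q) (Fin q) ℂ} {μ ν : ℂ}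
    {u v : Fin q → ℂ} (hμν : μ ≠ ν) (hμ : μ.re ≤ 0) (hν : ν.re ≤ 0) (hu : u ≠ 0) (hv : v ≠ 0)
    (hMu : M *ᵥ u = μ • u) (hMv : M *ᵥ v = ν • v) : reLam2Nonpos M := by
  classical
  set S := M.charpoly.roots.filter (fun μ : ℂ => μ.re ≤ 0)
  have hμS : μ ∈ S.toFinset := by
    simpa [S, hμ] using mem_charpoly_roots_of_mulVec_eq_smul hu hMu
  have hνS : ν ∈ S.toFinset := by
    simpa [S, hν] using mem_charpoly_roots_of_mulVec_eq_smul hv hMv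
  exact (Finset.one_lt_card.mpr ⟨μ, hμS, ν, hνS, hμν⟩).trans_le (Multiset.toFinset_card_le S)

theorem cM_mulVec_ofReal_of_mulVec_eq_smul {q : ℕ} {D R : Matrix (Fin q) (Fin q) ℝ}
    {u : Fin q → ℝ} {a b : ℝ} (hD : D *ᵥ u = a • u) (hR : R *ᵥ u = b • u) :
    cM D R *ᵥ (fun i => (u i : ℂ)) = (a + b * Complex.I) • fun i => (u i : ℂ) := by
  have hmap (A : Matrix (Fin q) (Fin q) ℝ) (c : ℝ) (hA : A *ᵥ u = c • u) :
      A.map (fun a => (a : ℂ)) *ᵥ (fun i => (u i : ℂ)) = (c : ℂ) • fun i => (u i : ℂ) := by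
    ext i
    have := congrArg (fun v : Fin q → ℝ => (v i : ℂ)) hA
    simpa [mulVec, dotProduct] using this
  rw [cM, add_mulVec, smul_mulVec, hmap D a hD, hmap R b hR, smul_smul, ← add_smul, mul_comm]

theorem IsIncidence.transpose_mulVec_one {q p : ℕ} {G : Matrix (Fin q) (Fin p) ℝ}
    (hG : IsIncidence G) : Gᵀ *ᵥ (fun _ => 1) = 0 := by
  ext j
  obtain ⟨k, ℓ, -, hcol⟩ := hG j
  simp [mulVec, dotProduct, hcol, Finset.sum_sub_distrib]

theorem lapOf_mulVec {q p : ℕ} (G : Matrix (Fin q) (Fin p) ℝ) (w : Fin p → ℝ)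
    (v : Fin q → ℝ) : lapOf G w *ᵥ v = G *ᵥ (w * Gᵀ *ᵥ v) := by
  rw [lapOf, ← mulVec_mulVec, ← mulVec_mulVec]
  congr 1
  ext i
  exact mulVec_diagonal w _ i

theorem lapOf_mulVec_eq_zero {q p : ℕ} {G : Matrix (Fin q) (Fin p) ℝ} (w : Fin p → ℝ)
    {v : Fin q → ℝ} (hv : Gᵀ *ᵥ v = 0) : lapOf G w *ᵥ v = 0 := by
  rw [lapOf_mulVec, hv, mul_zero, mulVec_zero]

theorem stmt16_general {q pd pr : ℕ}
    (Gd : Matrix (Fin q) (Fin pd) ℝ) (Gr : Matrix (Fin q) (Fin pr) ℝ)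
    (hGd : IsIncidence Gd) (hGr : IsIncidence Gr)
    (x : Fin pr → ℝ) (hx : x ≠ 0)
    (hx0 : Gdᵀ.mulVec (Gr.mulVec x) = 0)
    (hsgn : ∀ i, Real.sign ((Grᵀ.mulVec (Gr.mulVec x)) i) = Real.sign (x i)) :
    ∃ (wd : Fin pd → ℝ) (wr : Fin pr → ℝ),
      (∀ i, 0 < wd i) ∧ (∀ i, 0 < wr i) ∧
      reLam2Nonpos (cM (lapOf Gd wd) (lapOf Gr wr)) := by
  set y := Gr *ᵥ x
  choose wr hwr_pos hwr using fun i => Real.exists_pos_mul_eq_of_sign_eq (hsgn i)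
  have hRy : lapOf Gr wr *ᵥ y = y := by
    rw [lapOf_mulVec]
    congr 1
    exact funext hwr
  have hy : y ≠ 0 := by
    contrapose! hx
    ext i
    have hi := hsgn i
    rw [hx, mulVec_zero, Pi.zero_apply, Real.sign_zero] at hi
    exact Real.sign_eq_zero_iff.mp hi.symm
  obtain ⟨i₀, -⟩ := Function.ne_iff.mp hy
  have hker : cM (lapOf Gd 1) (lapOf Gr wr) *ᵥ (fun _ => 1) = (0 : ℂ) • fun _ => 1 := by
    simpa using cM_mulVec_ofReal_of_mulVec_eq_smul (u := fun _ => 1) (a := 0) (b := 0)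
      (by simpa using lapOf_mulVec_eq_zero 1 hGd.transpose_mulVec_one)
      (by simpa using lapOf_mulVec_eq_zero wr hGr.transpose_mulVec_one)
  have hrot : cM (lapOf Gd 1) (lapOf Gr wr) *ᵥ (fun i => (y i : ℂ)) =
      Complex.I • fun i => (y i : ℂ) := by
    simpa using cM_mulVec_ofReal_of_mulVec_eq_smul (a := 0) (b := 1)
      (by simpa using lapOf_mulVec_eq_zero 1 hx0) (by simpa using hRy)
  refine ⟨1, wr, fun _ => one_pos, hwr_pos,
    reLam2Nonpos_of_mulVec_eq_smul Complex.I_ne_zero.symm le_rfl (by simp)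
      (fun h => one_ne_zero (congrFun h i₀))
      (fun h => hy (funext fun i => Complex.ofReal_eq_zero.mp (congrFun h i))) hker hrot⟩

/-- If the union graph is connected, `B_d ≠ ∅`, and there is a nonzero `x` with
`G_dᵀ G_r x = 0` and `sgn(G_rᵀ G_r x) = sgn(x)`, then some choice of Laplacians
gives `Re λ₂(D + iR) ≤ 0` (the interconnection is not SSS). -/
theorem stmt16 {q pd pr : ℕ} (hq : 2 ≤ q)
    (Gd : Matrix (Fin q) (Fin pd) ℝ) (Gr : Matrix (Fin q) (Fin pr) ℝ)
    (hGd : IsIncidence Gd) (hGr : IsIncidence Gr)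
    (hconn : ∀ v : Fin q → ℝ, Gdᵀ.mulVec v = 0 → Grᵀ.mulVec v = 0 →
      ∃ c : ℝ, v = fun _ => c)
    (hpd : 0 < pd)
    (x : Fin pr → ℝ) (hx : x ≠ 0)
    (hx0 : Gdᵀ.mulVec (Gr.mulVec x) = 0)
    (hsgn : ∀ i, Real.sign ((Grᵀ.mulVec (Gr.mulVec x)) i) = Real.sign (x i)) :
    ∃ (wd : Fin pd → ℝ) (wr : Fin pr → ℝ),
      (∀ i, 0 < wd i) ∧ (∀ i, 0 < wr i) ∧
      reLam2Nonpos (cM (lapOf Gd wd) (lapOf Gr wr)) :=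
  stmt16_general Gd Gr hGd hGr x hx hx0 hsgn
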